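/- arXiv:1011.6658 — 2 statements merged into one kernel-verified Lean document; each statement's English description precedes it below -/
import Mathlib

section
/- Let V be a vector space of dimension n = m + k over a field with m ≤ k, let A ⊂ B ⊂ V be subspaces with dim A = m - d and dim B = m + d for some 0 ≤ d ≤ m, and let y ⊂ V be any m-dimensional subspace. Then there exists an m-dimensional subspace x with A ⊂ x ⊂ B and dim(x ∩ y) ≥ m + d - k. -/
/-!
Inside `B ⊓ y`, which has dimension at least `(m + d) + m - (m + k)`, choose `C` of
dimension exactly `m + d - k`. As `m ≤ k` and `d ≤ k` (from `B ≤ V`),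
`dim (A ⊔ C) ≤ (m - d) + (m + d - k) ≤ m`,
so `A ⊔ C` extends inside `B` to an `m`-dimensional `x`, and `C ≤ x ⊓ y`.
-/

open Module

namespace Submodule

variable {K V : Type*} [DivisionRing K] [AddCommGroup V] [Module K V] [FiniteDimensional K V]

theorem finrank_add_finrank_le_finrank_inf_add_finrank (p q : Submodule K V) :
    finrank K p + finrank K q ≤ finrank K ↥(p ⊓ q) + finrank K V := by
  rw [← finrank_sup_add_finrank_inf_eq, add_comm]
  exact Nat.add_le_add_left (finrank_le _) _

theorem exists_le_le_finrank_eq {p q : Submodule K V} (hpq : p ≤ q) {n : ℕ}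
    (hp : finrank K p ≤ n) (hq : n ≤ finrank K q) :
    ∃ x : Submodule K V, p ≤ x ∧ x ≤ q ∧ finrank K x = n := by
  induction n, hp using Nat.le_induction with
  | base => exact ⟨p, le_rfl, hpq, rfl⟩
  | succ n _ ih =>
    obtain ⟨x, hpx, hxq, hx⟩ := ih (by omega)
    have hxq_lt : x < q := lt_of_le_of_ne hxq fun h => by subst h; omega
    obtain ⟨v, hvq, hvx⟩ := SetLike.exists_of_lt hxq_lt
    refine ⟨x ⊔ span K {v}, le_sup_of_le_left hpx,
      sup_le hxq ((span_singleton_le_iff_mem _ _).2 hvq), ?_⟩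
    rw [finrank_sup_span_singleton hvx, hx]

end Submodule

theorem stmt_3_general {K V : Type*} [Field K] [AddCommGroup V] [Module K V] [FiniteDimensional K V]
    (m k d : ℕ) (hmk : m ≤ k) (hV : finrank K V = m + k)
    (A B y : Submodule K V) (hAB : A ≤ B)
    (hA : finrank K A = m - d) (hB : finrank K B = m + d) (hy : finrank K y = m) :
    ∃ x : Submodule K V, finrank K x = m ∧ A ≤ x ∧ x ≤ B ∧
      m + d - k ≤ finrank K ↥(x ⊓ y) := by
  have hBV : finrank K B ≤ finrank K V := Submodule.finrank_le B
  have hBy := Submodule.finrank_add_finrank_le_finrank_inf_add_finrank B y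
  obtain ⟨C, -, hC, hCdim⟩ :=
    Submodule.exists_le_le_finrank_eq (bot_le : ⊥ ≤ B ⊓ y) (n := m + d - k)
      (by simp) (by omega)
  have hAC : finrank K ↥(A ⊔ C) ≤ m :=
    (Submodule.finrank_add_le_finrank_add_finrank A C).trans (by omega)
  obtain ⟨x, hACx, hxB, hx⟩ :=
    Submodule.exists_le_le_finrank_eq (sup_le hAB (hC.trans inf_le_left)) hAC (by omega)
  refine ⟨x, hx, le_sup_left.trans hACx, hxB, ?_⟩
  rw [← hCdim]
  exact Submodule.finrank_mono (le_inf (le_sup_right.trans hACx) (hC.trans inf_le_right))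

/-- In `V` of dimension `m + k` with `m ≤ k`, given `A ⊂ B` with `dim A = m - d`,
`dim B = m + d`, and any `m`-dimensional subspace `y`, there is an `m`-dimensional
subspace `x` with `A ⊂ x ⊂ B` and `dim(x ∩ y) ≥ m + d - k`. -/
theorem stmt_3 {K V : Type*} [Field K] [AddCommGroup V] [Module K V] [FiniteDimensional K V]
    (m k d : ℕ) (hmk : m ≤ k) (hV : finrank K V = m + k) (hd : d ≤ m)
    (A B y : Submodule K V) (hAB : A ≤ B)
    (hA : finrank K A = m - d) (hB : finrank K B = m + d) (hy : finrank K y = m) :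
    ∃ x : Submodule K V, finrank K x = m ∧ A ≤ x ∧ x ≤ B ∧
      m + d - k ≤ finrank K ↥(x ⊓ y) :=
  stmt_3_general m k d hmk hV A B y hAB hA hB hy
end

section
/- Let V be a 2n-dimensional vector space with a nondegenerate symmetric bilinear form (over an algebraically closed field of characteristic zero), let A ⊂ V be isotropic of dimension n - 2d, and let y ⊂ V be a maximal isotropic subspace. Then x = (y ∩ A^⊥) + A is a maximal isotropic subspace of dimension n containing A, and dim(x + y) ≤ 2n - 2d. -/
/-!
Since `y` is Lagrangian, `y ⊓ A^⊥ = (y ⊔ A)^⊥`, so by nondegeneracy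
`dim (y ⊓ A^⊥) = 2n - dim (y ⊔ A)`; the modular law then gives
`dim ((y ⊓ A^⊥) ⊔ A) = 2n - dim y = n`. Finally `x ⊔ y = A ⊔ y` has dimension at most
`(n - 2d) + n`.
-/

open Module LinearMap

namespace LinearMap.BilinForm

section CommRing

variable {R M : Type*} [CommRing R] [AddCommGroup M] [Module R M] (B : LinearMap.BilinForm R M)

theorem orthogonal_sup (N L : Submodule R M) :
    B.orthogonal (N ⊔ L) = B.orthogonal N ⊓ B.orthogonal L := by
  refine le_antisymm (le_inf (B.orthogonal_le le_sup_left) (B.orthogonal_le le_sup_right)) ?_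
  rintro m ⟨hN, hL⟩ v hv
  obtain ⟨a, ha, b, hb, rfl⟩ := Submodule.mem_sup.mp hv
  simp [hN a ha, hL b hb]

theorem sup_le_orthogonal_sup (hB : B.IsRefl) {N L : Submodule R M}
    (hN : N ≤ B.orthogonal N) (hL : L ≤ B.orthogonal L) (hNL : N ≤ B.orthogonal L) :
    N ⊔ L ≤ B.orthogonal (N ⊔ L) := by
  have hLN : L ≤ B.orthogonal N := fun l hl n hn => hB _ _ (hNL hn l hl)
  rw [orthogonal_sup]
  exact sup_le (le_inf hN hNL) (le_inf hLN hL)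

end CommRing

section Field

variable {K V : Type*} [Field K] [AddCommGroup V] [Module K V] [FiniteDimensional K V]
  {B : LinearMap.BilinForm K V}

theorem orthogonal_eq_self_of_le_orthogonal (hB : B.Nondegenerate) {y : Submodule K V}
    (hy : y ≤ B.orthogonal y) (hdim : 2 * finrank K y = finrank K V) :
    B.orthogonal y = y :=
  (Submodule.eq_of_le_of_finrank_le hy (by rw [finrank_orthogonal hB]; omega)).symm

theorem finrank_inf_orthogonal_sup (hB : B.Nondegenerate) {A y : Submodule K V}
    (hA : A ≤ B.orthogonal A) (hy : B.orthogonal y = y) :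
    finrank K ↥((y ⊓ B.orthogonal A) ⊔ A) = finrank K y := by
  have hdimy : finrank K y = finrank K V - finrank K y := by
    conv_lhs => rw [← hy]
    exact finrank_orthogonal hB y
  have hinf : y ⊓ B.orthogonal A = B.orthogonal (y ⊔ A) := by rw [orthogonal_sup, hy]
  have hdim_inf : finrank K ↥(y ⊓ B.orthogonal A) = finrank K V - finrank K ↥(y ⊔ A) := by
    rw [hinf, finrank_orthogonal hB]
  have hmeet : y ⊓ B.orthogonal A ⊓ A = y ⊓ A := by rw [inf_assoc, inf_eq_right.mpr hA]
  have h₁ := Submodule.finrank_sup_add_finrank_inf_eq y A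
  have h₂ := Submodule.finrank_sup_add_finrank_inf_eq (y ⊓ B.orthogonal A) A
  have h₃ := Submodule.finrank_le (y ⊔ A)
  have h₄ := Submodule.finrank_le y
  rw [hmeet] at h₂
  omega

end Field

end LinearMap.BilinForm

theorem stmt_10_general {K V : Type*} [Field K]
    [AddCommGroup V] [Module K V] [FiniteDimensional K V]
    (n d : ℕ) (hd : 2 * d ≤ n)
    (B : LinearMap.BilinForm K V) (hB : B.Nondegenerate) (hsymm : B.IsSymm)
    (hV : finrank K V = 2 * n)
    (A y : Submodule K V)
    (hA : A ≤ B.orthogonal A) (hdimA : finrank K A = n - 2 * d)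
    (hy : y ≤ B.orthogonal y) (hdimy : finrank K y = n) :
    ((y ⊓ B.orthogonal A) ⊔ A) ≤ B.orthogonal ((y ⊓ B.orthogonal A) ⊔ A) ∧
    finrank K ↥((y ⊓ B.orthogonal A) ⊔ A) = n ∧
    A ≤ (y ⊓ B.orthogonal A) ⊔ A ∧
    finrank K ↥(((y ⊓ B.orthogonal A) ⊔ A) ⊔ y) ≤ 2 * n - 2 * d := by
  have hyy : B.orthogonal y = y := B.orthogonal_eq_self_of_le_orthogonal hB hy (by omega)
  have hx_iso : y ⊓ B.orthogonal A ≤ B.orthogonal (y ⊓ B.orthogonal A) :=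
    inf_le_left.trans (hy.trans (B.orthogonal_le inf_le_left))
  have hxy : (y ⊓ B.orthogonal A) ⊔ A ⊔ y = A ⊔ y := by
    rw [sup_comm (y ⊓ B.orthogonal A) A, sup_assoc, sup_eq_right.mpr (inf_le_left : y ⊓ B.orthogonal A ≤ y)]
  refine ⟨B.sup_le_orthogonal_sup hsymm.isRefl hx_iso hA inf_le_right,
    (B.finrank_inf_orthogonal_sup hB hA hyy).trans hdimy, le_sup_right, ?_⟩
  rw [hxy]
  have := Submodule.finrank_add_le_finrank_add_finrank A y
  omega

/-- In a `2n`-dimensional vector space with a nondegenerate symmetric bilinear form over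
an algebraically closed field of characteristic zero, if `A` is isotropic of dimension
`n - 2d` and `y` is maximal isotropic (of dimension `n`), then `x = (y ∩ A^⊥) + A` is a
maximal isotropic subspace of dimension `n` containing `A`, and `dim(x + y) ≤ 2n - 2d`. -/
theorem stmt_10 {K V : Type*} [Field K] [IsAlgClosed K] [CharZero K]
    [AddCommGroup V] [Module K V] [FiniteDimensional K V]
    (n d : ℕ) (hd : 2 * d ≤ n)
    (B : LinearMap.BilinForm K V) (hB : B.Nondegenerate) (hsymm : B.IsSymm)
    (hV : finrank K V = 2 * n)
    (A y : Submodule K V)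
    (hA : A ≤ B.orthogonal A) (hdimA : finrank K A = n - 2 * d)
    (hy : y ≤ B.orthogonal y) (hdimy : finrank K y = n) :
    ((y ⊓ B.orthogonal A) ⊔ A) ≤ B.orthogonal ((y ⊓ B.orthogonal A) ⊔ A) ∧
    finrank K ↥((y ⊓ B.orthogonal A) ⊔ A) = n ∧
    A ≤ (y ⊓ B.orthogonal A) ⊔ A ∧
    finrank K ↥(((y ⊓ B.orthogonal A) ⊔ A) ⊔ y) ≤ 2 * n - 2 * d :=
  stmt_10_general n d hd B hB hsymm hV A y hA hdimA hy hdimy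
end
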